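/- arXiv:2512.23979 — 4 statements merged into one kernel-verified Lean document; each statement's English description precedes it below -/
import Mathlib

section
/- Let X be a bounded real random variable with essential supremum M lying in the Weibull regime with parameter α > 0, and let g : ℝ → ℝ be strictly increasing and continuous with x ↦ g(M) - g(M - x) regularly varying at 0 of index β > 0. Then g(X) has essential supremum g(M) and lies in the Weibull regime with parameter α/β. -/
/-!
Put `G x = g M - g (M - x)` and let `j` be a right inverse of `G` near `0⁺`; then
`P(g X > g M - t) = P(X > M - j t)`, i.e. the tail of `g X` is `F ∘ j` with `F` the tail of `X`.
Since `G` is increasing and `G (j t) = t`, comparing `G (j t * a)` with `G (j (t u)) = t u` traps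
`j (t u)` between `j t * a` and `j t * b` whenever `a ^ β < u < b ^ β`, so `j` is regularly
varying of index `1 / β`. Since `F` is monotone, the same trapping gives
`F (j t * a) / F (j t) ≤ F (j (t u)) / F (j t) ≤ F (j t * b) / F (j t)`, and the outer
ratios tend to `a ^ α` and `b ^ α`, which can be taken arbitrarily close to `u ^ (α / β)`.
-/

open MeasureTheory Filter

/-- A function is regularly varying at `0⁺` with index `ρ`. -/
def RegVarAtZero (f : ℝ → ℝ) (ρ : ℝ) : Prop :=
  ∀ u : ℝ, 0 < u →
    Tendsto (fun t : ℝ => f (t * u) / f t)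
      (nhdsWithin 0 (Set.Ioi 0)) (nhds (u ^ ρ))

open Set Topology

lemma tendsto_mul_const_nhdsGT_zero {u : ℝ} (hu : 0 < u) :
    Tendsto (fun t : ℝ => t * u) (𝓝[>] 0) (𝓝[>] 0) := by
  refine tendsto_nhdsWithin_of_tendsto_nhds_of_eventually_within _ ?_ ?_
  · exact ((continuous_mul_const u).tendsto' 0 0 (zero_mul u)).mono_left nhdsWithin_le_nhds
  · filter_upwards [self_mem_nhdsWithin] with t ht using mul_pos ht hu

lemma RegVarAtZero.congr {f f' : ℝ → ℝ} {ρ : ℝ} (hf : RegVarAtZero f ρ)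
    (hff' : f =ᶠ[𝓝[>] 0] f') : RegVarAtZero f' ρ := by
  intro u hu
  refine (hf u hu).congr' ?_
  filter_upwards [hff', (tendsto_mul_const_nhdsGT_zero hu).eventually hff'] with t ht htu
  rw [ht, htu]

lemma exists_pos_lt_and_lt_rpow {x c α : ℝ} (hx : 0 < x) (hc : c < x ^ α) :
    ∃ a, 0 < a ∧ a < x ∧ c < a ^ α := by
  have h : ∀ᶠ y in 𝓝[<] x, c < y ^ α :=
    ((Real.continuousAt_rpow_const x α (Or.inl hx.ne')).eventually (lt_mem_nhds hc)).filter_mono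
      nhdsWithin_le_nhds
  obtain ⟨a, hca, ha⟩ := (h.and (Ioo_mem_nhdsLT hx)).exists
  exact ⟨a, ha.1, ha.2, hca⟩

lemma exists_gt_and_rpow_lt {x c α : ℝ} (hx : 0 < x) (hc : x ^ α < c) :
    ∃ b, x < b ∧ b ^ α < c := by
  have h : ∀ᶠ y in 𝓝[>] x, y ^ α < c :=
    ((Real.continuousAt_rpow_const x α (Or.inl hx.ne')).eventually (gt_mem_nhds hc)).filter_mono
      nhdsWithin_le_nhds
  obtain ⟨b, hbc, hb⟩ := (h.and self_mem_nhdsWithin).exists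
  exact ⟨b, hb, hbc⟩

namespace RegVarAtZero

variable {j : ℝ → ℝ} {ρ : ℝ}

lemma eventually_mul_lt_comp_mul (hj : RegVarAtZero j ρ) (hj_pos : ∀ᶠ t in 𝓝[>] 0, 0 < j t)
    {u a : ℝ} (hu : 0 < u) (ha : a < u ^ ρ) : ∀ᶠ t in 𝓝[>] 0, j t * a < j (t * u) := by
  filter_upwards [(hj u hu).eventually (lt_mem_nhds ha), hj_pos] with t ht hjt
  rwa [lt_div_iff₀ hjt, mul_comm] at ht

lemma eventually_comp_mul_lt_mul (hj : RegVarAtZero j ρ) (hj_pos : ∀ᶠ t in 𝓝[>] 0, 0 < j t)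
    {u b : ℝ} (hu : 0 < u) (hb : u ^ ρ < b) : ∀ᶠ t in 𝓝[>] 0, j (t * u) < j t * b := by
  filter_upwards [(hj u hu).eventually (gt_mem_nhds hb), hj_pos] with t ht hjt
  rwa [div_lt_iff₀ hjt, mul_comm b] at ht

lemma of_rightInverse {G : ℝ → ℝ} {β : ℝ} (hβ : 0 < β) (hG : RegVarAtZero G β)
    (hG_mono : StrictMono G) (hj_lim : Tendsto j (𝓝[>] 0) (𝓝[>] 0))
    (hGj : ∀ᶠ t in 𝓝[>] 0, G (j t) = t) : RegVarAtZero j β⁻¹ := by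
  intro u hu
  have hj_pos : ∀ᶠ t in 𝓝[>] 0, 0 < j t := hj_lim.eventually self_mem_nhdsWithin
  have hGju : ∀ᶠ t in 𝓝[>] 0, G (j (t * u)) = t * u :=
    (tendsto_mul_const_nhdsGT_zero hu).eventually hGj
  have hG_ratio : ∀ a, 0 < a → Tendsto (fun t => G (j t * a) / t) (𝓝[>] 0) (𝓝 (a ^ β)) :=
    fun a ha => ((hG a ha).comp hj_lim).congr' <| by
      filter_upwards [hGj] with t ht
      simp only [Function.comp_apply, ht]
  have hroot : (u ^ β⁻¹) ^ β = u := Real.rpow_inv_rpow hu.le hβ.ne'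
  refine tendsto_order.2 ⟨fun a' ha' => ?_, fun b' hb' => ?_⟩
  · obtain ⟨a, ha'a, hau⟩ := exists_between (max_lt ha' (Real.rpow_pos_of_pos hu β⁻¹))
    have ha : 0 < a := (le_max_right _ _).trans_lt ha'a
    filter_upwards [(hG_ratio a ha).eventually
      (gt_mem_nhds (hroot ▸ Real.rpow_lt_rpow ha.le hau hβ)), hGju, hj_pos, self_mem_nhdsWithin]
      with t hlt htu hjt (ht : 0 < t)
    rw [div_lt_iff₀ ht, mul_comm u t, ← htu] at hlt
    rw [lt_div_iff₀ hjt]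
    calc a' * j t < a * j t := by gcongr; exact (le_max_left _ _).trans_lt ha'a
      _ = j t * a := mul_comm _ _
      _ < j (t * u) := hG_mono.lt_iff_lt.1 hlt
  · obtain ⟨b, hub, hbb'⟩ := exists_between hb'
    have hb : 0 < b := (Real.rpow_pos_of_pos hu β⁻¹).trans hub
    filter_upwards [(hG_ratio b hb).eventually
      (lt_mem_nhds (hroot ▸ Real.rpow_lt_rpow (Real.rpow_nonneg hu.le _) hub hβ)), hGju, hj_pos,
      self_mem_nhdsWithin] with t hlt htu hjt (ht : 0 < t)
    rw [lt_div_iff₀ ht, mul_comm u t, ← htu] at hlt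
    rw [div_lt_iff₀ hjt]
    calc j (t * u) < j t * b := hG_mono.lt_iff_lt.1 hlt
      _ = b * j t := mul_comm _ _
      _ < b' * j t := by gcongr

lemma comp_of_monotone {F : ℝ → ℝ} {α : ℝ} (hF : RegVarAtZero F α) (hF_mono : Monotone F)
    (hF_pos : ∀ᶠ s in 𝓝[>] 0, 0 < F s) (hj : RegVarAtZero j ρ)
    (hj_lim : Tendsto j (𝓝[>] 0) (𝓝[>] 0)) : RegVarAtZero (F ∘ j) (α * ρ) := by
  intro u hu
  have hj_pos : ∀ᶠ t in 𝓝[>] 0, 0 < j t := hj_lim.eventually self_mem_nhdsWithin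
  have hFj_pos : ∀ᶠ t in 𝓝[>] 0, 0 < F (j t) := hj_lim.eventually hF_pos
  have hF_ratio :
      ∀ a, 0 < a → Tendsto (fun t => F (j t * a) / F (j t)) (𝓝[>] 0) (𝓝 (a ^ α)) :=
    fun a ha => (hF a ha).comp hj_lim
  rw [mul_comm, Real.rpow_mul hu.le]
  refine tendsto_order.2 ⟨fun c hc => ?_, fun c hc => ?_⟩
  · obtain ⟨a, ha, hau, hca⟩ := exists_pos_lt_and_lt_rpow (Real.rpow_pos_of_pos hu ρ) hc
    filter_upwards [(hF_ratio a ha).eventually (lt_mem_nhds hca),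
      hj.eventually_mul_lt_comp_mul hj_pos hu hau, hFj_pos] with t hlt hja hFj
    exact hlt.trans_le (div_le_div_of_nonneg_right (hF_mono hja.le) hFj.le)
  · obtain ⟨b, hub, hbc⟩ := exists_gt_and_rpow_lt (Real.rpow_pos_of_pos hu ρ) hc
    filter_upwards [(hF_ratio b (lt_trans (Real.rpow_pos_of_pos hu ρ) hub)).eventually
      (gt_mem_nhds hbc), hj.eventually_comp_mul_lt_mul hj_pos hu hub, hFj_pos] with t hlt hjb hFj
    exact (div_le_div_of_nonneg_right (hF_mono hjb.le) hFj.le).trans_lt hlt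

end RegVarAtZero

section InverseNearZero

variable {G : ℝ → ℝ}

lemma eventually_invFunOn_Ioi_zero (hG_mono : StrictMono G) (hG_cont : Continuous G)
    (hG0 : G 0 = 0) :
    ∀ᶠ t in 𝓝[>] 0,
      Function.invFunOn G (Ioi 0) t ∈ Ioi 0 ∧ G (Function.invFunOn G (Ioi 0) t) = t := by
  filter_upwards [Ioo_mem_nhdsGT (hG0 ▸ hG_mono one_pos)] with t ht
  refine Function.invFunOn_pos ?_
  obtain ⟨s, hs, hst⟩ := intermediate_value_Ioo zero_le_one hG_cont.continuousOn (hG0 ▸ ht)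
  exact ⟨s, hs.1, hst⟩

lemma tendsto_invFunOn_Ioi_zero (hG_mono : StrictMono G) (hG_cont : Continuous G)
    (hG0 : G 0 = 0) : Tendsto (Function.invFunOn G (Ioi 0)) (𝓝[>] 0) (𝓝[>] 0) := by
  have hinv := eventually_invFunOn_Ioi_zero hG_mono hG_cont hG0
  refine tendsto_nhdsWithin_iff.2 ⟨tendsto_order.2 ⟨fun a ha => ?_, fun b hb => ?_⟩, ?_⟩
  · filter_upwards [hinv] with t ht using ha.trans ht.1
  · filter_upwards [hinv, Ioo_mem_nhdsGT (hG0 ▸ hG_mono hb)] with t ht htb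
    exact hG_mono.lt_iff_lt.1 (ht.2.symm ▸ htb.2)
  · filter_upwards [hinv] with t ht using ht.1

end InverseNearZero

lemma StrictMono.map_apply_Ioi {μ : Measure ℝ} {g : ℝ → ℝ} (hg : StrictMono g)
    (hg_meas : Measurable g) (x : ℝ) : μ.map g (Ioi (g x)) = μ (Ioi x) := by
  rw [Measure.map_apply hg_meas measurableSet_Ioi]
  congr 1
  ext y
  simp [hg.lt_iff_lt]

lemma monotone_measure_Ioi_sub_toReal (μ : Measure ℝ) [IsFiniteMeasure μ] (M : ℝ) :
    Monotone fun t => (μ (Ioi (M - t))).toReal := fun _ _ hst =>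
  ENNReal.toReal_mono (measure_ne_top μ _) (measure_mono (Ioi_subset_Ioi (by linarith)))

theorem weibull_regime_preserved_under_tilt_function_general
    (μ : Measure ℝ) [IsProbabilityMeasure μ] (M α β : ℝ) (hβ : 0 < β)
    (hM_top : μ (Set.Ioi M) = 0)
    (hM_near : ∀ ε : ℝ, 0 < ε → 0 < μ (Set.Ioi (M - ε)))
    (hweib : RegVarAtZero (fun t => (μ (Set.Ioi (M - t))).toReal) α)
    (g : ℝ → ℝ) (hg_mono : StrictMono g) (hg_cont : Continuous g)
    (hg_rv : RegVarAtZero (fun t => g M - g (M - t)) β) :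
    (μ.map g) (Set.Ioi (g M)) = 0 ∧
    (∀ ε : ℝ, 0 < ε → 0 < (μ.map g) (Set.Ioi (g M - ε))) ∧
    RegVarAtZero (fun t => ((μ.map g) (Set.Ioi (g M - t))).toReal) (α / β) := by
  set G : ℝ → ℝ := fun t => g M - g (M - t)
  have hG_mono : StrictMono G := fun s t hst => sub_lt_sub_left (hg_mono (by linarith)) _
  have hG_cont : Continuous G := by fun_prop
  have hG0 : G 0 = 0 := by simp [G]
  set j := Function.invFunOn G (Ioi 0)
  have hj := eventually_invFunOn_Ioi_zero hG_mono hG_cont hG0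
  have hj_lim := tendsto_invFunOn_Ioi_zero hG_mono hG_cont hG0
  have htail : ∀ t, G (j t) = t → μ.map g (Ioi (g M - t)) = μ (Ioi (M - j t)) := by
    intro t ht
    have hgt : g M - t = g (M - j t) := by simp only [G] at ht; linarith
    rw [hgt, hg_mono.map_apply_Ioi hg_cont.measurable]
  refine ⟨hM_top ▸ hg_mono.map_apply_Ioi hg_cont.measurable M, fun ε hε => ?_, ?_⟩
  · obtain ⟨t, ⟨hjt, hGjt⟩, ht⟩ := (hj.and (Ioo_mem_nhdsGT hε)).exists
    calc 0 < μ (Ioi (M - j t)) := hM_near _ hjt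
      _ = μ.map g (Ioi (g M - t)) := (htail t hGjt).symm
      _ ≤ μ.map g (Ioi (g M - ε)) := measure_mono (Ioi_subset_Ioi (by linarith [ht.2]))
  · have hF_pos : ∀ᶠ s in 𝓝[>] 0, 0 < (μ (Ioi (M - s))).toReal := by
      filter_upwards [self_mem_nhdsWithin] with s hs
      exact ENNReal.toReal_pos (hM_near s hs).ne' (measure_ne_top μ _)
    rw [div_eq_mul_inv]
    refine (hweib.comp_of_monotone (monotone_measure_Ioi_sub_toReal μ M) hF_pos
      (.of_rightInverse hβ hg_rv hG_mono hj_lim (hj.mono fun _ => And.right)) hj_lim).congr ?_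
    filter_upwards [hj] with t ht
    exact congrArg ENNReal.toReal (htail t ht.2).symm

/-- If `X` (law `μ`, essential supremum `M`) is in the Weibull regime with
parameter `α > 0` and `g` is strictly increasing and continuous with
`x ↦ g(M) - g(M - x)` regularly varying at `0` of index `β > 0`, then `g(X)` has
essential supremum `g(M)` and is in the Weibull regime with parameter `α/β`. -/
theorem weibull_regime_preserved_under_tilt_function
    (μ : Measure ℝ) [IsProbabilityMeasure μ] (M α β : ℝ) (hα : 0 < α) (hβ : 0 < β)
    (hM_top : μ (Set.Ioi M) = 0)
    (hM_near : ∀ ε : ℝ, 0 < ε → 0 < μ (Set.Ioi (M - ε)))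
    (hweib : RegVarAtZero (fun t => (μ (Set.Ioi (M - t))).toReal) α)
    (g : ℝ → ℝ) (hg_mono : StrictMono g) (hg_cont : Continuous g)
    (hg_rv : RegVarAtZero (fun t => g M - g (M - t)) β) :
    (μ.map g) (Set.Ioi (g M)) = 0 ∧
    (∀ ε : ℝ, 0 < ε → 0 < (μ.map g) (Set.Ioi (g M - ε))) ∧
    RegVarAtZero (fun t => ((μ.map g) (Set.Ioi (g M - t))).toReal) (α / β) :=
  weibull_regime_preserved_under_tilt_function_general μ M α β hβ hM_top hM_near hweib g hg_mono
    hg_cont hg_rv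
end

section
/- Let X be a bounded real random variable with essential supremum M lying in the Weibull regime with parameter α > 0, and let F_X denote its CDF. Then as θ → ∞, E[e^{θX}] / ( e^{θM} (1 - F_X(M - 1/θ)) ) → Γ(1 + α). -/
open MeasureTheory Filter Real

/-!
Writing `G t = P(X > M - t)`, Tonelli turns `E[e^{θ(X - M)}]` into the Laplace-type integral
`∫_0^∞ e^{-u} G(u/θ) du`, so the ratio in question is `∫_0^∞ e^{-u} G(u/θ) / G(1/θ) du`.
Pointwise the integrand tends to `e^{-u} u^α` by regular variation, and its integral is
`Γ(1 + α)`. Dominated convergence applies because a bounded, nondecreasing, regularly varying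
`G` satisfies a global doubling bound `G(2t) ≤ 2^m G(t)` (near `0` from the index, away from `0`
from boundedness), which iterates to the Potter-type bound `G(ut) ≤ 2^m u^m G(t)` for `u ≥ 1`.
-/

open Set Topology
open scoped ENNReal

lemma ofReal_exp_neg_eq_setLIntegral_indicator {c : ℝ} (hc : 0 ≤ c) :
    ENNReal.ofReal (exp (-c)) =
      ∫⁻ u in Ioi 0, (Ioi c).indicator (fun u => ENNReal.ofReal (exp (-u))) u := by
  rw [lintegral_indicator measurableSet_Ioi, Measure.restrict_restrict measurableSet_Ioi,
    Ioi_inter_Ioi, sup_eq_left.mpr hc, ← integral_exp_neg_Ioi c,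
    ofReal_integral_eq_lintegral_ofReal (integrableOn_exp_neg_Ioi c)
      (ae_of_all _ fun u => (exp_pos _).le)]

lemma lintegral_exp_mul_sub_eq_of_ae_le {μ : Measure ℝ} [SFinite μ] {M θ : ℝ} (hθ : 0 < θ)
    (hM : ∀ᵐ x ∂μ, x ≤ M) :
    ∫⁻ x, ENNReal.ofReal (exp (θ * (x - M))) ∂μ =
      ∫⁻ u in Ioi 0, ENNReal.ofReal (exp (-u)) * μ (Ioi (M - u / θ)) := by
  let F : ℝ → ℝ → ℝ≥0∞ := fun x u =>
    (Ioi (θ * (M - x))).indicator (fun u => ENNReal.ofReal (exp (-u))) u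
  have hF : Measurable (Function.uncurry F) :=
    (measurable_snd.neg.exp.ennreal_ofReal).indicator
      (measurableSet_lt (by fun_prop) measurable_snd)
  have hsection :
      ∀ u, ∫⁻ x, F x u ∂μ = ENNReal.ofReal (exp (-u)) * μ (Ioi (M - u / θ)) := by
    intro u
    have hiff : ∀ x, u ∈ Ioi (θ * (M - x)) ↔ x ∈ Ioi (M - u / θ) := fun x => by
      rw [mem_Ioi, mem_Ioi, mul_comm, ← lt_div_iff₀ hθ, sub_lt_comm]
    simp only [F, indicator_apply, hiff]
    exact lintegral_indicator_const measurableSet_Ioi _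
  calc ∫⁻ x, ENNReal.ofReal (exp (θ * (x - M))) ∂μ
        = ∫⁻ x, (∫⁻ u in Ioi 0, F x u) ∂μ :=
        lintegral_congr_ae <| hM.mono fun x hx => by
          dsimp only
          rw [show θ * (x - M) = -(θ * (M - x)) by ring]
          exact ofReal_exp_neg_eq_setLIntegral_indicator (by nlinarith)
    _ = ∫⁻ u in Ioi 0, ∫⁻ x, F x u ∂μ := lintegral_lintegral_swap hF.aemeasurable
    _ = ∫⁻ u in Ioi 0, ENNReal.ofReal (exp (-u)) * μ (Ioi (M - u / θ)) :=
        lintegral_congr hsection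

lemma integral_exp_mul_eq_of_ae_le {μ : Measure ℝ} [IsFiniteMeasure μ] {M θ : ℝ}
    (hθ : 0 < θ) (hM : ∀ᵐ x ∂μ, x ≤ M) :
    ∫ x, exp (θ * x) ∂μ =
      exp (θ * M) * ∫ u in Ioi 0, exp (-u) * μ.real (Ioi (M - u / θ)) := by
  have htail : Monotone fun u => μ.real (Ioi (M - u / θ)) := fun a b hab =>
    measureReal_mono (Ioi_subset_Ioi (by gcongr))
  have hshift :
      ∫ x, exp (θ * (x - M)) ∂μ = ∫ u in Ioi 0, exp (-u) * μ.real (Ioi (M - u / θ)) := by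
    rw [integral_eq_lintegral_of_nonneg_ae (ae_of_all _ fun x => (exp_pos _).le) (by fun_prop),
      integral_eq_lintegral_of_nonneg_ae
        (ae_of_all _ fun u => mul_nonneg (exp_pos _).le measureReal_nonneg)
        (measurable_neg.exp.mul htail.measurable).aestronglyMeasurable,
      lintegral_exp_mul_sub_eq_of_ae_le hθ hM]
    congr 1
    refine lintegral_congr fun u => ?_
    rw [ENNReal.ofReal_mul (exp_pos _).le, ofReal_measureReal]
  calc ∫ x, exp (θ * x) ∂μ = ∫ x, exp (θ * M) * exp (θ * (x - M)) ∂μ := by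
        congr with x
        rw [← exp_add]
        ring_nf
    _ = exp (θ * M) * ∫ u in Ioi 0, exp (-u) * μ.real (Ioi (M - u / θ)) := by
        rw [integral_const_mul, hshift]

section RegularVariation

variable {G : ℝ → ℝ}

lemma le_pow_mul_of_doubling {K : ℝ} (hK : 0 ≤ K) (hG : ∀ t, 0 < t → G (2 * t) ≤ K * G t)
    (n : ℕ) {t : ℝ} (ht : 0 < t) : G (2 ^ n * t) ≤ K ^ n * G t := by
  induction n with
  | zero => simp
  | succ n ih =>
    calc G (2 ^ (n + 1) * t) = G (2 * (2 ^ n * t)) := by ring_nf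
      _ ≤ K * G (2 ^ n * t) := hG _ (by positivity)
      _ ≤ K * (K ^ n * G t) := mul_le_mul_of_nonneg_left ih hK
      _ = K ^ (n + 1) * G t := by ring

lemma le_mul_pow_mul_of_doubling {m : ℕ} (hmono : Monotone G)
    (hG : ∀ t, 0 < t → G (2 * t) ≤ 2 ^ m * G t) {u t : ℝ} (hu : 1 ≤ u) (ht : 0 < t)
    (hGt : 0 ≤ G t) : G (u * t) ≤ 2 ^ m * u ^ m * G t := by
  obtain ⟨n, hnu, hun⟩ := exists_nat_pow_near hu one_lt_two
  calc G (u * t) ≤ G (2 ^ (n + 1) * t) := hmono (mul_le_mul_of_nonneg_right hun.le ht.le)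
    _ ≤ (2 ^ m) ^ (n + 1) * G t := le_pow_mul_of_doubling (by positivity) hG _ ht
    _ = 2 ^ m * (2 ^ n) ^ m * G t := by ring
    _ ≤ 2 ^ m * u ^ m * G t := by gcongr

lemma RegVarAtZero.exists_doubling {α : ℝ} (hG : RegVarAtZero G α) (hmono : Monotone G)
    (hpos : ∀ t, 0 < t → 0 < G t) (hbdd : BddAbove (range G)) :
    ∃ m : ℕ, ∀ t, 0 < t → G (2 * t) ≤ 2 ^ m * G t := by
  obtain ⟨B, hB⟩ := hbdd
  obtain ⟨b, hb, hsmall⟩ := mem_nhdsGT_iff_exists_Ioo_subset.mp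
    ((hG 2 two_pos).eventually_lt_const (lt_add_one ((2 : ℝ) ^ α)))
  set K := max (2 ^ α + 1) (B / G b)
  have hdoubling : ∀ t, 0 < t → G (2 * t) ≤ K * G t := by
    intro t ht
    rcases lt_or_ge t b with htb | hbt
    · have h : G (t * 2) / G t < 2 ^ α + 1 := hsmall ⟨ht, htb⟩
      rw [div_lt_iff₀ (hpos t ht), mul_comm t] at h
      exact h.le.trans (mul_le_mul_of_nonneg_right (le_max_left _ _) (hpos t ht).le)
    · calc G (2 * t) ≤ B := hB (mem_range_self _)
        _ = B / G b * G b := by field_simp [(hpos b hb).ne']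
        _ ≤ K * G t := mul_le_mul (le_max_right _ _) (hmono hbt) (hpos b hb).le (by positivity)
  obtain ⟨m, hm⟩ := pow_unbounded_of_one_lt K one_lt_two
  exact ⟨m, fun t ht =>
    (hdoubling t ht).trans (mul_le_mul_of_nonneg_right hm.le (hpos t ht).le)⟩

theorem RegVarAtZero.tendsto_integral_exp_neg_mul_div {α : ℝ}
    (hG : RegVarAtZero G α) (hα : -1 < α) (hmono : Monotone G) (hpos : ∀ t, 0 < t → 0 < G t)
    (hbdd : BddAbove (range G)) :
    Tendsto (fun θ => ∫ u in Ioi 0, exp (-u) * G (u / θ) / G (1 / θ)) atTop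
      (𝓝 (Gamma (1 + α))) := by
  obtain ⟨m, hm⟩ := hG.exists_doubling hmono hpos hbdd
  have hratio :
      ∀ θ, 0 < θ → ∀ u, 0 < u → G (u / θ) / G (1 / θ) ≤ 1 + 2 ^ m * u ^ m := by
    intro θ hθ u hu
    have hGθ : 0 < G (1 / θ) := hpos _ (by positivity)
    rw [div_le_iff₀ hGθ]
    rcases le_or_gt u 1 with hu1 | hu1
    · calc G (u / θ) ≤ G (1 / θ) := hmono (by gcongr)
        _ ≤ (1 + 2 ^ m * u ^ m) * G (1 / θ) :=
          le_mul_of_one_le_left hGθ.le (le_add_of_nonneg_right (by positivity))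
    · calc G (u / θ) = G (u * (1 / θ)) := by ring_nf
        _ ≤ 2 ^ m * u ^ m * G (1 / θ) :=
          le_mul_pow_mul_of_doubling hmono hm hu1.le (by positivity) hGθ.le
        _ ≤ (1 + 2 ^ m * u ^ m) * G (1 / θ) := by gcongr; linarith
  have hbound_int : IntegrableOn (fun u => exp (-u) * (1 + 2 ^ m * u ^ m)) (Ioi 0) := by
    have hpow : IntegrableOn (fun u : ℝ => exp (-u) * u ^ m) (Ioi 0) := by
      refine (GammaIntegral_convergent (s := m + 1) (by positivity)).congr_fun (fun u hu => ?_)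
        measurableSet_Ioi
      simp [← rpow_natCast]
    exact ((integrableOn_exp_neg_Ioi 0).add (hpow.const_mul (2 ^ m))).congr_fun
      (fun u _ => by simp only [Pi.add_apply]; ring) measurableSet_Ioi
  rw [Gamma_eq_integral (by linarith), add_sub_cancel_left]
  refine tendsto_integral_filter_of_dominated_convergence _ ?_ ?_ hbound_int ?_
  · filter_upwards [eventually_gt_atTop 0] with θ hθ
    have hmono' : Monotone fun u => G (u / θ) := fun a b hab => hmono (by gcongr)
    exact ((measurable_neg.exp.mul hmono'.measurable).div_const _).aestronglyMeasurable
  · filter_upwards [eventually_gt_atTop 0] with θ hθ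
    refine (ae_restrict_iff' measurableSet_Ioi).mpr (Eventually.of_forall fun u hu => ?_)
    have hnn : 0 ≤ exp (-u) * G (u / θ) / G (1 / θ) :=
      div_nonneg (mul_nonneg (exp_pos _).le (hpos _ (div_pos hu hθ)).le)
        (hpos _ (by positivity)).le
    rw [norm_of_nonneg hnn, mul_div_assoc]
    exact mul_le_mul_of_nonneg_left (hratio θ hθ u hu) (exp_pos _).le
  · refine (ae_restrict_iff' measurableSet_Ioi).mpr (Eventually.of_forall fun u hu => ?_)
    have hinv : Tendsto (fun θ : ℝ => 1 / θ) atTop (𝓝[>] 0) := by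
      simpa only [one_div] using tendsto_inv_atTop_nhdsGT_zero
    have hlim := ((hG u hu).comp hinv).const_mul (exp (-u))
    refine hlim.congr fun θ => ?_
    simp only [Function.comp, mul_div_assoc, one_div_mul_eq_div]

end RegularVariation

/-- Karamata asymptotics for the moment generating function of a bounded random
variable in the Weibull regime: as `θ → ∞`,
`E[e^{θX}] / (e^{θM} (1 - F_X(M - 1/θ))) → Γ(1 + α)`. -/
theorem mgf_asymptotics_weibull
    (μ : Measure ℝ) [IsProbabilityMeasure μ] (M α : ℝ) (hα : 0 < α)
    (hM_top : μ (Set.Ioi M) = 0)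
    (hM_near : ∀ ε : ℝ, 0 < ε → 0 < μ (Set.Ioi (M - ε)))
    (hweib : RegVarAtZero (fun t => (μ (Set.Ioi (M - t))).toReal) α) :
    Tendsto
      (fun θ : ℝ =>
        (∫ x, exp (θ * x) ∂μ) /
          (exp (θ * M) * (1 - (μ (Set.Iic (M - 1/θ))).toReal)))
      atTop (nhds (Real.Gamma (1 + α))) := by
  set G : ℝ → ℝ := fun t => μ.real (Ioi (M - t))
  have hmono : Monotone G := fun s t hst => measureReal_mono (Ioi_subset_Ioi (by linarith))
  have hpos : ∀ t, 0 < t → 0 < G t := fun t ht =>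
    ENNReal.toReal_pos (hM_near t ht).ne' (measure_ne_top μ _)
  have hbdd : BddAbove (range G) := ⟨1, forall_mem_range.mpr fun t => measureReal_le_one⟩
  have hle_M : ∀ᵐ x ∂μ, x ≤ M := by
    simpa only [mem_Ioi, not_lt] using measure_eq_zero_iff_ae_notMem.mp hM_top
  refine (hweib.tendsto_integral_exp_neg_mul_div (by linarith) hmono hpos hbdd).congr' ?_
  filter_upwards [eventually_gt_atTop 0] with θ hθ
  have htail : 1 - (μ (Iic (M - 1 / θ))).toReal = G (1 / θ) := by
    rw [← measureReal_def, ← probReal_compl_eq_one_sub measurableSet_Iic, compl_Iic]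
  rw [htail, integral_exp_mul_eq_of_ae_le hθ hle_M, mul_div_mul_left _ _ (exp_ne_zero _),
    ← integral_div]
  rfl
end

section
/- Let X be a bounded real random variable with essential supremum M lying in the Weibull regime with parameter α > 0 and CDF F_X. Define M_θ = E[e^{2θX}]/(E[e^{θX}])². Then as θ → ∞, (1 - F_X(M - 1/θ)) · M_θ → 2^{-α} / Γ(1 + α). In particular M_θ grows at most polynomially in θ. -/
/-!
Write `G s = P(X > M - s)`. Fubini applied to
`e^{θx} = e^{θM} ∫_{t > θ(M - x)} e^{-t} dt` (valid for `x ≤ M`) gives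
`E[e^{θX}] = e^{θM} ∫₀^∞ e^{-t} G(t/θ) dt`. Regular variation makes
`G(t/θ)/G(1/θ) → t^α` pointwise, and iterating the doubling bound `G(2s) ≤ C G(s)` near `0`
dominates this ratio by a multiple of `t^β + 1`, so dominated convergence yields
`E[e^{θX}] ∼ Γ(1+α) e^{θM} G(1/θ)` (Karamata's Abelian theorem). Applying this at `θ` and
`2θ` and using `G(1/(2θ))/G(1/θ) → 2^{-α}` gives the limit.
-/

open MeasureTheory Filter Real

open Set Topology
open scoped ENNReal

theorem lintegral_mul_measure_Ioi (μ ν : Measure ℝ) [SFinite μ] [SFinite ν] {f : ℝ → ℝ}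
    (hf : Measurable f) {h : ℝ → ℝ≥0∞} (hh : Measurable h) :
    ∫⁻ t, h t * μ (Ioi (f t)) ∂ν = ∫⁻ x, ∫⁻ t in {t | f t < x}, h t ∂ν ∂μ := by
  have hmeas : Measurable (Function.uncurry fun x t => {t | f t < x}.indicator h t) :=
    (hh.comp measurable_snd).indicator (measurableSet_lt (hf.comp measurable_snd) measurable_fst)
  simp_rw [← lintegral_indicator (measurableSet_lt hf measurable_const)]
  rw [lintegral_lintegral_swap hmeas.aemeasurable]
  refine lintegral_congr fun t => ?_
  rw [← lintegral_indicator_const measurableSet_Ioi]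
  rfl

theorem lintegral_Ioi_exp_neg (c : ℝ) :
    ∫⁻ t in Ioi c, ENNReal.ofReal (exp (-t)) = ENNReal.ofReal (exp (-c)) := by
  rw [← integral_exp_neg_Ioi, ofReal_integral_eq_lintegral_ofReal
    (exp_neg_integrableOn_Ioi c one_pos |>.congr_fun (fun _ _ => by simp) measurableSet_Ioi)
    (.of_forall fun _ => (exp_pos _).le)]

theorem lintegral_exp_mul_of_measure_Ioi_eq_zero (μ : Measure ℝ) [SFinite μ] {M θ : ℝ}
    (hθ : 0 < θ) (hM : μ (Ioi M) = 0) :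
    ∫⁻ x, ENNReal.ofReal (exp (θ * x)) ∂μ =
      ENNReal.ofReal (exp (θ * M)) *
        ∫⁻ t in Ioi 0, ENNReal.ofReal (exp (-t)) * μ (Ioi (M - t / θ)) := by
  have hle : ∀ᵐ x ∂μ, x ≤ M := by
    rw [ae_iff]; simp only [not_le]; exact hM
  rw [lintegral_mul_measure_Ioi _ _ (by fun_prop) (by fun_prop),
    ← lintegral_const_mul' _ _ ENNReal.ofReal_ne_top]
  refine lintegral_congr_ae (hle.mono fun x hx => ?_)
  dsimp only
  have hset : {t | M - t / θ < x} ∩ Ioi 0 = Ioi (θ * (M - x)) := by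
    ext t
    simp only [mem_inter_iff, mem_Ioi, mem_ofPred_eq, sub_lt_comm, lt_div_iff₀ hθ]
    constructor
    · exact fun h => by linarith [h.1]
    · exact fun h => ⟨by linarith, by nlinarith⟩
  rw [Measure.restrict_restrict (measurableSet_lt (by fun_prop) measurable_const), hset,
    lintegral_Ioi_exp_neg, ← ENNReal.ofReal_mul (exp_pos _).le, ← exp_add]
  ring_nf

theorem monotone_measureReal_Ioi_sub (μ : Measure ℝ) [IsFiniteMeasure μ] (M : ℝ) :
    Monotone fun s => μ.real (Ioi (M - s)) :=
  fun _ _ hst => measureReal_mono (Ioi_subset_Ioi (by linarith))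

theorem integral_exp_mul_of_measure_Ioi_eq_zero (μ : Measure ℝ) [IsFiniteMeasure μ] {M θ : ℝ}
    (hθ : 0 < θ) (hM : μ (Ioi M) = 0) :
    ∫ x, exp (θ * x) ∂μ =
      exp (θ * M) * ∫ t in Ioi 0, exp (-t) * μ.real (Ioi (M - t / θ)) := by
  have htail : Measurable fun t => μ.real (Ioi (M - t / θ)) :=
    ((monotone_measureReal_Ioi_sub μ M).comp
      fun _ _ h => div_le_div_of_nonneg_right h hθ.le).measurable
  have hmeas : Measurable fun t => exp (-t) * μ.real (Ioi (M - t / θ)) := by fun_prop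
  rw [integral_eq_lintegral_of_nonneg_ae (.of_forall fun _ => (exp_pos _).le) (by fun_prop),
    integral_eq_lintegral_of_nonneg_ae (.of_forall fun _ => by positivity)
      hmeas.aestronglyMeasurable,
    lintegral_exp_mul_of_measure_Ioi_eq_zero μ hθ hM, ENNReal.toReal_mul,
    ENNReal.toReal_ofReal (exp_pos _).le]
  congr 2
  refine lintegral_congr fun t => ?_
  rw [ENNReal.ofReal_mul (exp_pos _).le, ofReal_measureReal]

section Doubling

variable {G : ℝ → ℝ} {B C s₁ : ℝ}

theorem le_pow_mul_of_doubling_s9 (hmono : Monotone G) (hpos : ∀ s, 0 < s → 0 < G s)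
    (hB : ∀ s, G s ≤ B) (hC : 1 ≤ C) (hs₁ : 0 < s₁)
    (hdoub : ∀ s ∈ Ioc 0 s₁, G (2 * s) ≤ C * G s) (n : ℕ) {s : ℝ} (hs : s ∈ Ioc 0 s₁) :
    G (2 ^ n * s) ≤ C ^ n * G s * (B / G (s₁ / 2)) := by
  have hD : 0 < G (s₁ / 2) := hpos _ (half_pos hs₁)
  have hBD : 1 ≤ B / G (s₁ / 2) := (one_le_div hD).2 (hB _)
  induction n generalizing s with
  | zero => simpa using le_mul_of_one_le_right (hpos s hs.1).le hBD
  | succ n ih =>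
    rw [pow_succ, mul_assoc]
    by_cases h2s : 2 * s ≤ s₁
    · calc G (2 ^ n * (2 * s)) ≤ C ^ n * G (2 * s) * (B / G (s₁ / 2)) :=
            ih ⟨mul_pos two_pos hs.1, h2s⟩
        _ ≤ C ^ n * (C * G s) * (B / G (s₁ / 2)) := by
            gcongr; exact hdoub s hs
        _ = C ^ (n + 1) * G s * (B / G (s₁ / 2)) := by ring
    -- past `s₁` the doubling bound is unavailable, but there `G ≤ B` and `G (s₁ / 2) ≤ G s`
    · calc G (2 ^ n * (2 * s)) ≤ G (s₁ / 2) * (B / G (s₁ / 2)) := by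
            rw [mul_div_cancel₀ _ hD.ne']; exact hB _
        _ ≤ G s * (B / G (s₁ / 2)) := by gcongr; exact hmono (by linarith)
        _ ≤ C ^ (n + 1) * G s * (B / G (s₁ / 2)) := by
            rw [mul_assoc]
            exact le_mul_of_one_le_left (by positivity [hpos s hs.1]) (one_le_pow₀ hC)

end Doubling

namespace RegVarAtZero

variable {G : ℝ → ℝ} {ρ : ℝ}

theorem tendsto_div_div (h : RegVarAtZero G ρ) {u : ℝ} (hu : 0 < u) :
    Tendsto (fun θ => G (u / θ) / G (1 / θ)) atTop (𝓝 (u ^ ρ)) :=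
  ((h u hu).comp tendsto_inv_atTop_nhdsGT_zero).congr fun θ => by
    simp only [Function.comp_apply, div_eq_inv_mul, mul_one]

theorem exists_doubling_s9 (h : RegVarAtZero G ρ) (hpos : ∀ s, 0 < s → 0 < G s) {C : ℝ}
    (hC : (2 : ℝ) ^ ρ < C) : ∃ s₁ > 0, ∀ s ∈ Ioc 0 s₁, G (2 * s) ≤ C * G s := by
  obtain ⟨s₁, hs₁, hsub⟩ :=
    mem_nhdsGT_iff_exists_Ioc_subset.mp ((h 2 two_pos).eventually_lt_const hC)
  refine ⟨s₁, hs₁, fun s hs => ?_⟩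
  have := hsub hs
  rw [mem_ofPred_eq, div_lt_iff₀ (hpos s hs.1), mul_comm s] at this
  exact this.le

theorem exists_div_le_mul_rpow_add_one (h : RegVarAtZero G ρ) (hmono : Monotone G)
    (hpos : ∀ s, 0 < s → 0 < G s) {B : ℝ} (hB : ∀ s, G s ≤ B) :
    ∃ K β : ℝ, 0 ≤ β ∧
      ∀ᶠ θ in atTop, ∀ t, 0 < t → G (t / θ) / G (1 / θ) ≤ K * (t ^ β + 1) := by
  set β := max ρ 0 + 1
  have hβ : 0 ≤ β := by positivity
  set C := (2 : ℝ) ^ β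
  have hC : 1 ≤ C := one_le_rpow one_le_two hβ
  obtain ⟨s₁, hs₁, hdoub⟩ :=
    h.exists_doubling_s9 hpos (rpow_lt_rpow_of_exponent_lt one_lt_two
      (show ρ < β by linarith [le_max_left ρ 0]))
  have hBD : 1 ≤ B / G (s₁ / 2) := (one_le_div (hpos _ (half_pos hs₁))).2 (hB _)
  set K := C * (B / G (s₁ / 2))
  have hK : 1 ≤ K := one_le_mul_of_one_le_of_one_le hC hBD
  refine ⟨K, β, hβ, ?_⟩
  filter_upwards [eventually_ge_atTop s₁⁻¹, eventually_gt_atTop 0] with θ hθs₁ hθ t ht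
  have hθ' : 1 / θ ∈ Ioc 0 s₁ :=
    ⟨by positivity, by rw [one_div]; exact inv_le_of_inv_le₀ hs₁ hθs₁⟩
  have hG : 0 < G (1 / θ) := hpos _ hθ'.1
  have htβ : 0 ≤ t ^ β := rpow_nonneg ht.le β
  rcases le_or_gt t 1 with ht1 | ht1
  · calc G (t / θ) / G (1 / θ) ≤ 1 := div_le_one_of_le₀ (hmono (by gcongr)) hG.le
      _ ≤ K * (t ^ β + 1) := by nlinarith
  obtain ⟨n, hnt, htn⟩ := exists_nat_pow_near ht1.le one_lt_two
  have hpow : C ^ (n + 1) ≤ C * t ^ β := by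
    calc C ^ (n + 1) = ((2 : ℝ) ^ (n + 1)) ^ β := by
          rw [← rpow_natCast C, ← rpow_mul zero_le_two, mul_comm, rpow_mul zero_le_two,
            rpow_natCast]
      _ ≤ (2 * t) ^ β := by gcongr; rw [pow_succ']; linarith
      _ = C * t ^ β := mul_rpow zero_le_two ht.le
  calc G (t / θ) / G (1 / θ) ≤ G (2 ^ (n + 1) * (1 / θ)) / G (1 / θ) := by
        gcongr; exact hmono (by rw [mul_one_div]; gcongr)
    _ ≤ C ^ (n + 1) * (B / G (s₁ / 2)) := by
        rw [div_le_iff₀ hG]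
        linarith [le_pow_mul_of_doubling_s9 hmono hpos hB hC hs₁ hdoub (n + 1) hθ']
    _ ≤ C * t ^ β * (B / G (s₁ / 2)) := by gcongr
    _ = K * t ^ β := by ring
    _ ≤ K * (t ^ β + 1) := by linarith

theorem tendsto_integral_exp_neg_mul_div_s9 (h : RegVarAtZero G ρ) (hρ : -1 < ρ)
    (hmono : Monotone G) (hpos : ∀ s, 0 < s → 0 < G s) {B : ℝ} (hB : ∀ s, G s ≤ B) :
    Tendsto (fun θ => (∫ t in Ioi 0, exp (-t) * G (t / θ)) / G (1 / θ)) atTop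
      (𝓝 (Gamma (1 + ρ))) := by
  obtain ⟨K, β, hβ, hbound⟩ := h.exists_div_le_mul_rpow_add_one hmono hpos hB
  have hG : Measurable G := hmono.measurable
  rw [Gamma_eq_integral (by linarith), add_sub_cancel_left]
  simp_rw [← integral_div, mul_div_assoc]
  refine tendsto_integral_filter_of_dominated_convergence
    (fun t => K * (exp (-t) * t ^ β) + K * exp (-t))
    (.of_forall fun θ => by fun_prop) ?_ ?_ ?_
  · filter_upwards [hbound, eventually_gt_atTop 0] with θ hθ hθ₀
    refine ae_restrict_of_forall_mem measurableSet_Ioi fun t (ht : 0 < t) => ?_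
    have := hpos _ (div_pos ht hθ₀)
    have := hpos _ (one_div_pos.2 hθ₀)
    rw [norm_of_nonneg (by positivity)]
    nlinarith [hθ t ht, exp_pos (-t)]
  · have hGamma : IntegrableOn (fun t => exp (-t) * t ^ β) (Ioi 0) := by
      simpa using GammaIntegral_convergent (by linarith : 0 < β + 1)
    have hexp : IntegrableOn (fun t => exp (-t)) (Ioi 0) := by
      simpa using exp_neg_integrableOn_Ioi 0 one_pos
    exact (hGamma.const_mul K).add (hexp.const_mul K)
  · exact ae_restrict_of_forall_mem measurableSet_Ioi fun t (ht : 0 < t) =>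
      (h.tendsto_div_div ht).const_mul _

end RegVarAtZero

/-- For a bounded random variable in the Weibull regime with parameter `α > 0`,
with `M_θ = E[e^{2θX}]/(E[e^{θX}])²`, one has
`(1 - F_X(M - 1/θ)) · M_θ → 2^{-α}/Γ(1+α)` as `θ → ∞`. -/
theorem M_theta_asymptotics_weibull
    (μ : Measure ℝ) [IsProbabilityMeasure μ] (M α : ℝ) (hα : 0 < α)
    (hM_top : μ (Set.Ioi M) = 0)
    (hM_near : ∀ ε : ℝ, 0 < ε → 0 < μ (Set.Ioi (M - ε)))
    (hweib : RegVarAtZero (fun t => (μ (Set.Ioi (M - t))).toReal) α) :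
    Tendsto
      (fun θ : ℝ =>
        (1 - (μ (Set.Iic (M - 1/θ))).toReal) *
          ((∫ x, exp (2 * θ * x) ∂μ) / (∫ x, exp (θ * x) ∂μ) ^ 2))
      atTop (nhds ((2 : ℝ) ^ (-α) / Real.Gamma (1 + α))) := by
  simp_rw [← measureReal_def] at hweib ⊢
  set G : ℝ → ℝ := fun s => μ.real (Ioi (M - s))
  set L : ℝ → ℝ := fun θ => ∫ t in Ioi 0, exp (-t) * G (t / θ)
  have hG : ∀ s, 0 < s → 0 < G s := fun s hs =>
    ENNReal.toReal_pos (hM_near s hs).ne' (measure_ne_top μ _)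
  have hL : Tendsto (fun θ => L θ / G (1 / θ)) atTop (𝓝 (Gamma (1 + α))) :=
    hweib.tendsto_integral_exp_neg_mul_div_s9 (by linarith) (monotone_measureReal_Ioi_sub μ M) hG
      fun _ => measureReal_le_one
  have hratio : Tendsto (fun θ => G (1 / (2 * θ)) / G (1 / θ)) atTop (𝓝 (2 ^ (-α))) := by
    rw [rpow_neg zero_le_two, ← inv_rpow zero_le_two, ← one_div]
    simpa only [div_div] using hweib.tendsto_div_div one_half_pos
  have hlim := ((hL.comp (tendsto_id.const_mul_atTop two_pos)).mul hratio).div (hL.pow 2)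
    (by positivity)
  rw [show Gamma (1 + α) * 2 ^ (-α) / Gamma (1 + α) ^ 2 = 2 ^ (-α) / Gamma (1 + α) by
    field_simp] at hlim
  refine hlim.congr' ?_
  filter_upwards [eventually_gt_atTop 0] with θ hθ
  have htail : 1 - μ.real (Iic (M - 1 / θ)) = G (1 / θ) := by
    rw [← probReal_compl_eq_one_sub measurableSet_Iic, compl_Iic]
  have hmgf : ∫ x, exp (θ * x) ∂μ = exp (θ * M) * L θ :=
    integral_exp_mul_of_measure_Ioi_eq_zero μ hθ hM_top
  have hmgf₂ : ∫ x, exp (2 * θ * x) ∂μ = exp (θ * M) ^ 2 * L (2 * θ) := by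
    rw [integral_exp_mul_of_measure_Ioi_eq_zero μ (by positivity) hM_top, ← exp_nat_mul,
      Nat.cast_ofNat, mul_assoc]
  have hG₁ := hG (1 / θ) (by positivity)
  have hG₂ := hG (1 / (2 * θ)) (by positivity)
  simp only [Function.comp_apply, Pi.div_apply, id]
  rw [htail, hmgf, hmgf₂]
  field_simp
end

section
/- Let X be a bounded random vector in ℝ^d, g : ℝ^d → ℝ^d continuous, and θ ∈ ℝ^d a unit vector. Suppose x ↦ θᵀg(x) has a unique maximizer x_θ on the support of X, and that for every ε > 0, P(θᵀ(g(x_θ) - g(X)) < ε) > 0. Define the tilted law P(X_{cθ} ∈ A) = E[e^{cθᵀg(X)} 1_{X ∈ A}] / E[e^{cθᵀg(X)}]. Then for every closed set A contained in the support of X with x_θ ∉ A, we have P(X_{c_n θ} ∈ A) → 0 along any sequence c_n → ∞; hence X_{c_n θ} → x_θ in distribution. -/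
open MeasureTheory Filter Real

/-!
Write `f x = ⟪θ, g x⟫` and `M = f x_θ`. Since `A` is a compact subset of the support avoiding
`x_θ`, the unique-maximizer assumption gives `a < M` with `f ≤ a` on `A`. For `b ∈ (a, M)` the set
`{b < f}` has positive mass `p`, so for `c ≥ 0`
`∫_A e^{c f} / ∫ e^{c f} ≤ e^{c a} / (p e^{c b}) = e^{-c (b - a)} / p → 0`.
-/

section ExponentialTilting

variable {α : Type*} [MeasurableSpace α] {μ : Measure α} {f : α → ℝ} {r : ℝ}

theorem integrable_exp_mul_of_ae_le [IsFiniteMeasure μ] (hf : AEStronglyMeasurable f μ) {K : ℝ}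
    (hK : ∀ᵐ x ∂μ, f x ≤ K) (hr : 0 ≤ r) : Integrable (fun x => exp (r * f x)) μ := by
  refine Integrable.of_bound (by fun_prop) (exp (r * K)) ?_
  filter_upwards [hK] with x hx
  rw [norm_of_nonneg (exp_pos _).le]
  gcongr

theorem norm_setIntegral_exp_mul_le {A : Set α} (hA : μ A ≠ ⊤) {a : ℝ} (hfA : ∀ x ∈ A, f x ≤ a)
    (hr : 0 ≤ r) : ‖∫ x in A, exp (r * f x) ∂μ‖ ≤ exp (r * a) * μ.real A := by
  refine norm_setIntegral_le_of_norm_le_const hA.lt_top fun x hx => ?_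
  rw [norm_of_nonneg (exp_pos _).le]
  gcongr
  exact hfA x hx

theorem exp_mul_mul_measureReal_le_integral_exp_mul [IsFiniteMeasure μ] (hf : Measurable f)
    (hint : Integrable (fun x => exp (r * f x)) μ) (hr : 0 ≤ r) (b : ℝ) :
    exp (r * b) * μ.real {x | b < f x} ≤ ∫ x, exp (r * f x) ∂μ :=
  calc exp (r * b) * μ.real {x | b < f x}
      ≤ ∫ x in {x | b < f x}, exp (r * f x) ∂μ := by
        refine setIntegral_ge_of_const_le_real (measurableSet_lt measurable_const hf)
          (measure_ne_top μ _) (fun x hx => ?_) hint.integrableOn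
        gcongr
        exact le_of_lt hx
    _ ≤ ∫ x, exp (r * f x) ∂μ :=
        setIntegral_le_integral hint (ae_of_all _ fun x => (exp_pos _).le)

theorem norm_setIntegral_exp_mul_div_integral_le [IsFiniteMeasure μ] (hf : Measurable f)
    {K : ℝ} (hK : ∀ᵐ x ∂μ, f x ≤ K) {A : Set α} {a b : ℝ} (hfA : ∀ x ∈ A, f x ≤ a)
    (hb : μ {x | b < f x} ≠ 0) (hr : 0 ≤ r) :
    ‖(∫ x in A, exp (r * f x) ∂μ) / ∫ x, exp (r * f x) ∂μ‖
      ≤ μ.real A / μ.real {x | b < f x} * exp (-(r * (b - a))) := by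
  have hp : 0 < μ.real {x | b < f x} := ENNReal.toReal_pos hb (measure_ne_top μ _)
  have hden := exp_mul_mul_measureReal_le_integral_exp_mul hf
    (integrable_exp_mul_of_ae_le hf.aestronglyMeasurable hK hr) hr b
  rw [norm_div, norm_of_nonneg (integral_nonneg (μ := μ) fun x => (exp_pos _).le)]
  calc ‖∫ x in A, exp (r * f x) ∂μ‖ / ∫ x, exp (r * f x) ∂μ
      ≤ exp (r * a) * μ.real A / (exp (r * b) * μ.real {x | b < f x}) := by
        gcongr
        exact norm_setIntegral_exp_mul_le (measure_ne_top μ A) hfA hr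
    _ = μ.real A / μ.real {x | b < f x} * exp (-(r * (b - a))) := by
        rw [show r * a = r * b + -(r * (b - a)) by ring, exp_add]
        field_simp

theorem tendsto_setIntegral_exp_mul_div_integral_zero [IsFiniteMeasure μ] (hf : Measurable f)
    {K : ℝ} (hK : ∀ᵐ x ∂μ, f x ≤ K) {A : Set α} {a b : ℝ} (hab : a < b)
    (hfA : ∀ x ∈ A, f x ≤ a) (hb : μ {x | b < f x} ≠ 0) {ι : Type*} {l : Filter ι}
    {c : ι → ℝ} (hc : Tendsto c l atTop) :
    Tendsto (fun i => (∫ x in A, exp (c i * f x) ∂μ) / ∫ x, exp (c i * f x) ∂μ) l (nhds 0) := by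
  have hdecay : Tendsto (fun i => μ.real A / μ.real {x | b < f x} * exp (-(c i * (b - a))))
      l (nhds 0) := by
    simpa using ((tendsto_exp_atBot.comp (tendsto_neg_atTop_atBot.comp
      (hc.atTop_mul_const (sub_pos.2 hab)))).const_mul (μ.real A / μ.real {x | b < f x}))
  refine squeeze_zero_norm' ?_ hdecay
  filter_upwards [hc.eventually_ge_atTop 0] with i hi
  exact norm_setIntegral_exp_mul_div_integral_le hf hK hfA hb hi

end ExponentialTilting

theorem tilted_law_concentrates_general
    {d : ℕ} (μ : Measure (EuclideanSpace ℝ (Fin d))) [IsProbabilityMeasure μ]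
    (S : Set (EuclideanSpace ℝ (Fin d))) (hS_closed : IsClosed S)
    (hS_bdd : Bornology.IsBounded S) (hS_full : μ Sᶜ = 0)
    (g : EuclideanSpace ℝ (Fin d) → EuclideanSpace ℝ (Fin d))
    (hg : Continuous g)
    (θ : EuclideanSpace ℝ (Fin d))
    (xθ : EuclideanSpace ℝ (Fin d))
    (hmax : ∀ y ∈ S, y ≠ xθ → (inner ℝ θ (g y) : ℝ) < (inner ℝ θ (g xθ) : ℝ))
    (hnear : ∀ ε : ℝ, 0 < ε →
      0 < μ {x | (inner ℝ θ (g xθ) : ℝ) - (inner ℝ θ (g x) : ℝ) < ε}) :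
    ∀ A : Set (EuclideanSpace ℝ (Fin d)), A ⊆ S → IsClosed A → xθ ∉ A →
      ∀ c : ℕ → ℝ, Tendsto c atTop atTop →
        Tendsto
          (fun n : ℕ =>
            (∫ x in A, exp (c n * (inner ℝ θ (g x) : ℝ)) ∂μ) /
              (∫ x, exp (c n * (inner ℝ θ (g x) : ℝ)) ∂μ))
          atTop (nhds 0) := by
  intro A hAS hA_closed hxA c hc
  set f := fun x => (inner ℝ θ (g x) : ℝ)
  have hf : Continuous f := continuous_const.inner hg
  have hS : IsCompact S := Metric.isCompact_of_isClosed_isBounded hS_closed hS_bdd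
  obtain ⟨K, hK⟩ := hS.bddAbove_image hf.continuousOn
  obtain ⟨a, haM, hfA⟩ : ∃ a < f xθ, ∀ x ∈ A, f x ≤ a := by
    obtain ⟨a', hMa', ha'⟩ := (hS.of_isClosed_subset hA_closed hAS).exists_forall_le'
      (f := fun x => -f x) hf.neg.continuousOn (a := -f xθ)
      fun y hy => neg_lt_neg (hmax y (hAS hy) (ne_of_mem_of_not_mem hy hxA))
    exact ⟨-a', by linarith, fun x hx => by linarith [ha' x hx]⟩
  obtain ⟨b, hab, hbM⟩ := exists_between haM
  have hb : μ {x | b < f x} ≠ 0 := by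
    simpa only [f, sub_lt_sub_iff_left] using (hnear (f xθ - b) (sub_pos.2 hbM)).ne'
  exact tendsto_setIntegral_exp_mul_div_integral_zero hf.measurable
    (ae_iff.2 hS_full |>.mono fun x hx => hK ⟨x, hx, rfl⟩) hab hfA hb hc

/-- Law of large numbers for exponential tilting of a bounded random vector:
under a unique-maximizer assumption, the tilted law concentrates at the
maximizer `x_θ`: for any closed `A ⊆ supp X` with `x_θ ∉ A`,
`P(X_{c_n θ} ∈ A) → 0` whenever `c_n → ∞`. -/
theorem tilted_law_concentrates
    {d : ℕ} (μ : Measure (EuclideanSpace ℝ (Fin d))) [IsProbabilityMeasure μ]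
    (S : Set (EuclideanSpace ℝ (Fin d))) (hS_closed : IsClosed S)
    (hS_bdd : Bornology.IsBounded S) (hS_full : μ Sᶜ = 0)
    (hS_min : ∀ U : Set (EuclideanSpace ℝ (Fin d)),
      IsOpen U → (U ∩ S).Nonempty → 0 < μ U)
    (g : EuclideanSpace ℝ (Fin d) → EuclideanSpace ℝ (Fin d))
    (hg : Continuous g)
    (θ : EuclideanSpace ℝ (Fin d)) (hθ : ‖θ‖ = 1)
    (xθ : EuclideanSpace ℝ (Fin d)) (hxθ : xθ ∈ S)
    (hmax : ∀ y ∈ S, y ≠ xθ → (inner ℝ θ (g y) : ℝ) < (inner ℝ θ (g xθ) : ℝ))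
    (hnear : ∀ ε : ℝ, 0 < ε →
      0 < μ {x | (inner ℝ θ (g xθ) : ℝ) - (inner ℝ θ (g x) : ℝ) < ε}) :
    ∀ A : Set (EuclideanSpace ℝ (Fin d)), A ⊆ S → IsClosed A → xθ ∉ A →
      ∀ c : ℕ → ℝ, Tendsto c atTop atTop →
        Tendsto
          (fun n : ℕ =>
            (∫ x in A, exp (c n * (inner ℝ θ (g x) : ℝ)) ∂μ) /
              (∫ x, exp (c n * (inner ℝ θ (g x) : ℝ)) ∂μ))
          atTop (nhds 0) :=
  tilted_law_concentrates_general μ S hS_closed hS_bdd hS_full g hg θ xθ hmax hnear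
end
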